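/- arXiv:1210.0650 — 2 statements merged into one kernel-verified Lean document; each statement's English description precedes it below -/
import Mathlib

section
/- Let |W⟩ = (|001⟩ + |010⟩ + |100⟩)/√3 in (ℂ²)^{⊗3}, let |+⟩ = (|0⟩+|1⟩)/√2 and |−⟩ = (|0⟩−|1⟩)/√2. Then for every assignment of the three bras ⟨0|, ⟨+|, ⟨−| to the three tensor positions (i.e. for every permutation π of the three slots), the amplitude obtained by contracting |W⟩ with ⟨0| in slot π(1), ⟨+| in slot π(2) and ⟨−| in slot π(3) is zero. Consequently, whenever one party measures in the z-basis obtaining |0⟩ and the other two measure in the x-basis, the two x-outcomes always agree, so the pairwise quantum key distribution protocol with W₃ is correct. -/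
/-!
The W-state is invariant under permuting the tensor slots, so the amplitude
`⟨u 0|⟨u 1|⟨u 2|W⟩` is a symmetric function of the three bras and it suffices to
treat one ordering: `⟨0|⟨+|⟨−|W⟩ = (⟨+|0⟩⟨−|1⟩ + ⟨+|1⟩⟨−|0⟩)/√3 = (-1 + 1)/(2√3) = 0`.
-/

open TensorProduct

noncomputable section

/-- ℂ², the complex Hilbert space with computational basis `e 0`, `e 1`. -/
abbrev V : Type := Fin 2 → ℂ

/-- The computational basis vectors `|0⟩`, `|1⟩` of ℂ². -/
def e (i : Fin 2) : V := Pi.single i 1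

/-- The bra `⟨b|`, the dual basis functional to `|b⟩`. -/
def bra (b : Fin 2) : V →ₗ[ℂ] ℂ := LinearMap.proj b

/-- The bra `⟨+| = (⟨0| + ⟨1|)/√2`. -/
def braPlus : V →ₗ[ℂ] ℂ := (Real.sqrt 2 : ℂ)⁻¹ • (bra 0 + bra 1)

/-- The bra `⟨−| = (⟨0| − ⟨1|)/√2`. -/
def braMinus : V →ₗ[ℂ] ℂ := (Real.sqrt 2 : ℂ)⁻¹ • (bra 0 - bra 1)

/-- The W-state `(|001⟩ + |010⟩ + |100⟩)/√3` in `(ℂ²)^{⊗3}`. -/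
def W : V ⊗[ℂ] (V ⊗[ℂ] V) :=
  (Real.sqrt 3 : ℂ)⁻¹ •
    (e 0 ⊗ₜ[ℂ] (e 0 ⊗ₜ[ℂ] e 1) + e 0 ⊗ₜ[ℂ] (e 1 ⊗ₜ[ℂ] e 0) + e 1 ⊗ₜ[ℂ] (e 0 ⊗ₜ[ℂ] e 0))

/-- Full contraction of the three tensor slots with functionals `f`, `g`, `h`,
giving the measurement amplitude `⟨f|⟨g|⟨h|ψ⟩ ∈ ℂ`. -/
def contract3 (f g h : V →ₗ[ℂ] ℂ) : V ⊗[ℂ] (V ⊗[ℂ] V) →ₗ[ℂ] ℂ :=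
  (TensorProduct.lid ℂ ℂ).toLinearMap ∘ₗ
    TensorProduct.map f
      ((TensorProduct.lid ℂ ℂ).toLinearMap ∘ₗ TensorProduct.map g h)

/-- The three bras `⟨0|`, `⟨+|`, `⟨−|` to be distributed over the three slots. -/
def bras : Fin 3 → (V →ₗ[ℂ] ℂ) := ![bra 0, braPlus, braMinus]

lemma contract3_W (f g h : V →ₗ[ℂ] ℂ) :
    contract3 f g h W = (Real.sqrt 3 : ℂ)⁻¹ *
      (f (e 0) * (g (e 0) * h (e 1)) + f (e 0) * (g (e 1) * h (e 0)) +
        f (e 1) * (g (e 0) * h (e 0))) := by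
  simp [contract3, W, smul_eq_mul, mul_add]

def wAmplitude (u : Fin 3 → V →ₗ[ℂ] ℂ) : ℂ := contract3 (u 0) (u 1) (u 2) W

/-- `W` is `3^{-1/2} ∑ᵢ |δ_{0i} δ_{1i} δ_{2i}⟩`, the sum of the basis states with one excitation. -/
lemma wAmplitude_eq_sum (u : Fin 3 → V →ₗ[ℂ] ℂ) :
    wAmplitude u =
      (Real.sqrt 3 : ℂ)⁻¹ * ∑ i : Fin 3, ∏ j : Fin 3, u j (e (if j = i then 1 else 0)) := by
  simp only [wAmplitude, contract3_W, Fin.sum_univ_three, Fin.prod_univ_three]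
  simp only [Fin.reduceEq, if_true, if_false]
  ring

lemma wAmplitude_comp_perm (u : Fin 3 → V →ₗ[ℂ] ℂ) (π : Equiv.Perm (Fin 3)) :
    wAmplitude (u ∘ π) = wAmplitude u := by
  have hslot (i : Fin 3) : ∏ j, (u ∘ π) j (e (if j = i then 1 else 0)) =
      ∏ k, u k (e (if k = π i then 1 else 0)) :=
    Fintype.prod_equiv π _ _ fun j => by simp [π.injective.eq_iff]
  simp only [wAmplitude_eq_sum, hslot]
  rw [Equiv.sum_comp π fun k => ∏ j, u j (e (if j = k then 1 else 0))]

@[simp] lemma bra_e (i j : Fin 2) : bra i (e j) = if i = j then 1 else 0 := by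
  simp [bra, e, Pi.single_apply]

lemma wAmplitude_bras : wAmplitude bras = 0 := by
  simp [wAmplitude, contract3_W, bras, braPlus, braMinus]

/-- Correctness of pairwise QKD with W₃: for every assignment of the bras
`⟨0|, ⟨+|, ⟨−|` to the three tensor slots (i.e. for every permutation of the
slots), the resulting amplitude against the W-state is zero.  Hence when the
decider's z-outcome is `|0⟩`, the two x-outcomes always agree. -/
theorem w_qkd_correct :
    ∀ π : Equiv.Perm (Fin 3),
      contract3 (bras (π 0)) (bras (π 1)) (bras (π 2)) W = 0 := by
  intro π
  exact (wAmplitude_comp_perm bras π).trans wAmplitude_bras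
end
end

section
/- Fix N ≥ 2. For s ∈ {0,1} and x : {2,…,N} → {0,1}, define the N-qubit GHZ-class state |GHZ^N_{s,x}⟩ := (|0, x₂, …, x_N⟩ + (−1)^s |1, 1−x₂, …, 1−x_N⟩)/√2 in (ℂ²)^{⊗N}. Let U_N be the composite of the CNOT gates with control the first qubit and target the k-th qubit for k = 2, …, N, followed by the Hadamard gate on the first qubit. Then U_N |GHZ^N_{s,x}⟩ = |s, x₂, …, x_N⟩ for all s and x. Hence the N-qubit GHZ measurement circuit decodes 2^N distinguishable GHZ-class states into N classical bits, validating superdense coding with N-GHZ. -/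
noncomputable section

/-- The N-qubit state space `(ℂ²)^{⊗N}`, realised as the space of functions on
the computational basis `Fin N → Fin 2`. -/
abbrev QState (N : ℕ) : Type := (Fin N → Fin 2) → ℂ

/-- the basis vector `|b₁,…,b_N⟩` of `(ℂ²)^{⊗N}`. -/
def ket {N : ℕ} (b : Fin N → Fin 2) : QState N := Pi.single b 1

/-!
The CNOT fan-out adds the first bit to every other bit, so it fixes `|0, x⟩` and sends
`|1, 1 - x⟩` to `|1, x⟩`: the GHZ-class state becomes `(|0⟩ + (-1)^s |1⟩)/√2 ⊗ |x⟩`,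
and the Hadamard maps `(|0⟩ + (-1)^s |1⟩)/√2` to `|s⟩`.
-/

section Circuit

variable {N : ℕ} [NeZero N]

theorem list_prod_cnot_ket {CNOT : Fin N → Module.End ℂ (QState N)}
    (hC : ∀ k : Fin N, k ≠ 0 → ∀ b : Fin N → Fin 2,
      CNOT k (ket b) = ket (Function.update b k (b 0 + b k)))
    {L : List (Fin N)} (hnd : L.Nodup) (h0 : (0 : Fin N) ∉ L) (b : Fin N → Fin 2) :
    (L.map CNOT).prod (ket b) = ket (fun k => if k ∈ L then b 0 + b k else b k) := by
  induction L with
  | nil => simp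
  | cons j L ih =>
    obtain ⟨hjL, hnd_tail⟩ := List.nodup_cons.mp hnd
    obtain ⟨hj0, h0L⟩ : j ≠ 0 ∧ (0 : Fin N) ∉ L := by simpa [eq_comm] using h0
    rw [List.map_cons, List.prod_cons, Module.End.mul_apply, ih hnd_tail h0L, hC j hj0]
    congr 1
    funext k
    by_cases hkj : k = j
    · subst hkj
      simp [h0L, hjL]
    · simp [hkj, h0L]

theorem fanout_cnot_ket {CNOT : Fin N → Module.End ℂ (QState N)}
    (hC : ∀ k : Fin N, k ≠ 0 → ∀ b : Fin N → Fin 2,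
      CNOT k (ket b) = ket (Function.update b k (b 0 + b k)))
    (b : Fin N → Fin 2) :
    (((List.finRange N).filter (fun k => k ≠ 0)).map CNOT).prod (ket b) =
      ket (fun k => if k = 0 then b 0 else b 0 + b k) := by
  rw [list_prod_cnot_ket hC ((List.nodup_finRange N).filter _) (by simp)]
  congr 1
  funext k
  by_cases hk : k = 0 <;> simp [hk]

theorem fanout_cnot_ghz {CNOT : Fin N → Module.End ℂ (QState N)}
    (hC : ∀ k : Fin N, k ≠ 0 → ∀ b : Fin N → Fin 2,
      CNOT k (ket b) = ket (Function.update b k (b 0 + b k)))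
    (s : Fin 2) (x : Fin N → Fin 2) :
    (((List.finRange N).filter (fun k => k ≠ 0)).map CNOT).prod
      ((Real.sqrt 2 : ℂ)⁻¹ • (ket (Function.update x 0 0) +
        ((-1 : ℂ))^(s : ℕ) • ket (fun k => if k = 0 then 1 else 1 - x k))) =
      (Real.sqrt 2 : ℂ)⁻¹ • (ket (Function.update x 0 0) +
        ((-1 : ℂ))^(s : ℕ) • ket (Function.update x 0 1)) := by
  have h_even : (((List.finRange N).filter (fun k => k ≠ 0)).map CNOT).prod
      (ket (Function.update x 0 0)) = ket (Function.update x 0 0) := by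
    rw [fanout_cnot_ket hC]
    congr 1
    funext k
    by_cases hk : k = 0 <;> simp [hk]
  have h_odd : (((List.finRange N).filter (fun k => k ≠ 0)).map CNOT).prod
      (ket (fun k => if k = 0 then 1 else 1 - x k)) = ket (Function.update x 0 1) := by
    rw [fanout_cnot_ket hC]
    congr 1
    funext k
    have h_flip : ∀ a : Fin 2, (1 : Fin 2) + (1 - a) = a := by decide
    by_cases hk : k = 0 <;> simp [hk, h_flip]
  rw [map_smul, map_add, map_smul, h_even, h_odd]

theorem sqrt_two_inv_mul_self : ((Real.sqrt 2 : ℂ))⁻¹ * ((Real.sqrt 2 : ℂ))⁻¹ = 2⁻¹ := by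
  rw [← mul_inv, ← Complex.ofReal_mul, Real.mul_self_sqrt zero_le_two, Complex.ofReal_ofNat]

theorem hadamard_ket_signed_sum {H1 : Module.End ℂ (QState N)}
    (hH : ∀ b : Fin N → Fin 2,
      H1 (ket b) = (Real.sqrt 2 : ℂ)⁻¹ •
        (ket (Function.update b 0 0) +
          ((-1 : ℂ))^((b 0 : ℕ)) • ket (Function.update b 0 1)))
    (s : Fin 2) (b : Fin N → Fin 2) :
    H1 ((Real.sqrt 2 : ℂ)⁻¹ •
        (ket (Function.update b 0 0) + ((-1 : ℂ))^(s : ℕ) • ket (Function.update b 0 1))) =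
      ket (Function.update b 0 s) := by
  simp only [map_smul, map_add, hH, Function.update_idem, Function.update_self]
  fin_cases s
  · norm_num
    match_scalars
    · linear_combination 2 * sqrt_two_inv_mul_self
    · ring
  · norm_num
    match_scalars
    · ring
    · linear_combination 2 * sqrt_two_inv_mul_self

end Circuit

theorem sdc_nghz_valid_general (N : ℕ) [NeZero N]
    (CNOT : Fin N → Module.End ℂ (QState N))
    (H1 : Module.End ℂ (QState N))
    (hC : ∀ k : Fin N, k ≠ 0 → ∀ b : Fin N → Fin 2,
      CNOT k (ket b) = ket (Function.update b k (b 0 + b k)))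
    (hH : ∀ b : Fin N → Fin 2,
      H1 (ket b) = (Real.sqrt 2 : ℂ)⁻¹ •
        (ket (Function.update b 0 0) +
          ((-1 : ℂ))^((b 0 : ℕ)) • ket (Function.update b 0 1))) :
    ∀ (s : Fin 2) (x : Fin N → Fin 2),
      (H1 * (((List.finRange N).filter (fun k => k ≠ 0)).map CNOT).prod)
        ((Real.sqrt 2 : ℂ)⁻¹ •
          (ket (Function.update x 0 0) +
            ((-1 : ℂ))^(s : ℕ) • ket (fun k => if k = 0 then 1 else 1 - x k))) =
      ket (Function.update x 0 s) := by
  intro s x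
  rw [Module.End.mul_apply, fanout_cnot_ghz hC, hadamard_ket_signed_sum hH]

/-- Validity of superdense coding with the N-qubit GHZ state: let `CNOT k`
(for `k ≠ 0`) be the controlled-not with control the first qubit and target
the k-th qubit, and `H1` the Hadamard on the first qubit.  Then the circuit
`U_N = H1 ∘ (CNOT₂ ∘ ⋯ ∘ CNOT_N)` maps each N-qubit GHZ-class state
`|GHZ^N_{s,x}⟩ = (|0,x₂,…,x_N⟩ + (−1)^s |1,1−x₂,…,1−x_N⟩)/√2` to the
computational basis state `|s,x₂,…,x_N⟩`, decoding the `2^N` distinguishable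
GHZ-class states into N classical bits. -/
theorem sdc_nghz_valid (N : ℕ) [NeZero N] (hN : 2 ≤ N)
    (CNOT : Fin N → Module.End ℂ (QState N))
    (H1 : Module.End ℂ (QState N))
    (hC : ∀ k : Fin N, k ≠ 0 → ∀ b : Fin N → Fin 2,
      CNOT k (ket b) = ket (Function.update b k (b 0 + b k)))
    (hH : ∀ b : Fin N → Fin 2,
      H1 (ket b) = (Real.sqrt 2 : ℂ)⁻¹ •
        (ket (Function.update b 0 0) +
          ((-1 : ℂ))^((b 0 : ℕ)) • ket (Function.update b 0 1))) :
    ∀ (s : Fin 2) (x : Fin N → Fin 2),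
      (H1 * (((List.finRange N).filter (fun k => k ≠ 0)).map CNOT).prod)
        ((Real.sqrt 2 : ℂ)⁻¹ •
          (ket (Function.update x 0 0) +
            ((-1 : ℂ))^(s : ℕ) • ket (fun k => if k = 0 then 1 else 1 - x k))) =
      ket (Function.update x 0 s) :=
  sdc_nghz_valid_general N CNOT H1 hC hH
end
end
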